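/- Let λ ∈ ρ(A_{αβ}). Then the closure in L²(0,1) ⊕ L²(0,1) of the image (A_{αβ} − λI)^{−1}( L²(0,1) ⊕ L²(𝒲) ) equals L²(0,1) ⊕ L²(𝒲). -/

import Mathlib

/-
Write `S = L²(0,1) ⊕ L²(𝒲)`. It is closed because `L²` convergence implies a.e. convergence of
a subsequence. `R` maps `S` into `S`: if `(Y, Z) = R (F, G)` with `G = 0` on `{w = 0}`, the second
row of `(A - λ)(Y, Z) = (F, G)` gives `(u - λ) Z = 0` on `{w = 0}`, so `(0, 1_{w = 0} Z)` lies in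
the kernel of `A - λ` and vanishes. Conversely, if `Y` is smooth with compact support in `(0,1)`
and `Z ∈ L²(𝒲)`, then `(Y, Z)` lies in the domain (the boundary conditions hold trivially) and
`(A - λ)(Y, Z) ∈ S`, so `(Y, Z) ∈ R S`; such `Y` are dense in `L²(0,1)`.
-/

open MeasureTheory Filter

/-- Lebesgue measure restricted to `(0,1)`. -/
noncomputable def m01 : Measure ℝ := volume.restrict (Set.Ioo 0 1)

/-- The graph of the Hain-Lüst operator `A_{αβ}`:
`(Y,Z)` lies in the domain (i.e. `Y` has an `H²(0,1)` representative `y` — `y` is `C¹` on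
`[0,1]` with absolutely continuous derivative whose a.e. derivative `y''` is in `L²` —
satisfying the boundary conditions) and `(F,G) = A_{αβ}(Y,Z)`. -/
def HLGraph (q u w : ℝ → ℂ) (α β : ℝ)
    (Y Z F G : Lp ℂ 2 m01) : Prop :=
  ∃ y y' y'' : ℝ → ℂ,
    -- `y` is differentiable on `[0,1]` with derivative `y'`
    (∀ t ∈ Set.Icc (0:ℝ) 1, HasDerivWithinAt y (y' t) (Set.Icc (0:ℝ) 1) t) ∧
    -- `y` is continuously differentiable
    ContinuousOn y' (Set.Icc (0:ℝ) 1) ∧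
    -- `y'` is absolutely continuous with a.e. derivative `y''`
    (∀ t ∈ Set.Icc (0:ℝ) 1, y' t = y' 0 + ∫ s in (0:ℝ)..t, y'' s) ∧
    -- `y'' ∈ L²(0,1)`
    MemLp y'' 2 m01 ∧
    -- boundary conditions `y'(1) + cot β · y(1) = 0` and `y'(0) + cot α · y(0) = 0`
    (y' 1 + (((Real.cos β / Real.sin β : ℝ) : ℂ)) * y 1 = 0) ∧
    (y' 0 + (((Real.cos α / Real.sin α : ℝ) : ℂ)) * y 0 = 0) ∧
    (Y : ℝ → ℂ) =ᵐ[m01] y ∧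
    -- the action `A_{αβ}(y,z) = (−y'' + q y + w z, w y + u z)`
    (F : ℝ → ℂ) =ᵐ[m01] (fun x => -(y'' x) + q x * y x + w x * Z x) ∧
    (G : ℝ → ℂ) =ᵐ[m01] (fun x => w x * y x + u x * Z x)

open Set Topology Metric
open scoped ENNReal ContDiff

instance : IsFiniteMeasure m01 := isFiniteMeasure_restrict.2 (by simp)

theorem exists_contDiff_cutoff_Ioo {a b : ℝ} (hab : a < b) {η : ℝ} (hη : 0 < η) :
    ∃ χ : ℝ → ℝ, ContDiff ℝ ∞ χ ∧ tsupport χ ⊆ Ioo a b ∧ (∀ x, χ x ∈ Icc 0 1) ∧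
      volume.restrict (Ioo a b) {x | χ x ≠ 1} ≤ ENNReal.ofReal η := by
  set r := (b - a) / 2 with hr
  set s := min r η / 4 with hs_def
  have hs : 0 < s := by positivity
  have hsr : 4 * s ≤ r := by linarith [min_le_left r η]
  have hsη : 4 * s ≤ η := by linarith [min_le_right r η]
  let χ : ContDiffBump ((a + b) / 2) := ⟨r - 2 * s, r - s, by linarith, by linarith⟩
  have hball : closedBall ((a + b) / 2) (r - s) ⊆ Ioo a b := by
    intro x hx
    rw [Metric.mem_closedBall, Real.dist_eq, abs_le] at hx
    constructor <;> linarith [hx.1, hx.2, hr]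
  refine ⟨χ, χ.contDiff, χ.tsupport_eq ▸ hball, fun x => ⟨χ.nonneg, χ.le_one⟩, ?_⟩
  have hin : closedBall ((a + b) / 2) (r - 2 * s) ⊆ Ioo a b :=
    (closedBall_subset_closedBall (by linarith)).trans hball
  calc volume.restrict (Ioo a b) {x | χ x ≠ 1}
      ≤ volume.restrict (Ioo a b) (closedBall ((a + b) / 2) (r - 2 * s))ᶜ :=
        measure_mono fun x hx hmem => hx (χ.one_of_mem_closedBall hmem)
    _ = ENNReal.ofReal (b - a) - ENNReal.ofReal (2 * (r - 2 * s)) := by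
        rw [measure_compl measurableSet_closedBall (measure_ne_top _ _),
          Measure.restrict_apply_univ, Measure.restrict_apply measurableSet_closedBall,
          inter_eq_left.2 hin, Real.volume_Ioo, Real.volume_closedBall]
    _ = ENNReal.ofReal (4 * s) := by
        rw [← ENNReal.ofReal_sub _ (by linarith)]
        congr 1
        ring
    _ ≤ ENNReal.ofReal η := ENNReal.ofReal_le_ofReal hsη

namespace MeasureTheory

theorem MemLp.exists_contDiff_tsupport_subset_Ioo {F : Type*} [NormedAddCommGroup F]
    [NormedSpace ℝ F] {p : ℝ≥0∞} (hp : p ≠ ⊤) (hp₁ : 1 ≤ p) {a b : ℝ} {f : ℝ → F}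
    (hf : MemLp f p (volume.restrict (Ioo a b))) {ε : ℝ} (hε : 0 < ε) :
    ∃ g : ℝ → F, ContDiff ℝ ∞ g ∧ tsupport g ⊆ Ioo a b ∧
      eLpNorm (f - g) p (volume.restrict (Ioo a b)) ≤ ENNReal.ofReal ε := by
  rcases le_or_gt b a with hba | hab
  · refine ⟨0, contDiff_const, by simp, ?_⟩
    simp [Ioo_eq_empty_of_le hba]
  have hε₂ : 0 < ε / 2 := by positivity
  obtain ⟨g, hg_supp, hg_smooth, hfg⟩ := hf.exist_eLpNorm_sub_le hp hp₁ hε₂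
  obtain ⟨M, hM⟩ := hg_supp.exists_bound_of_continuous hg_smooth.continuous
  obtain ⟨η, hη, hη_ind⟩ := exists_eLpNorm_indicator_le (μ := volume.restrict (Ioo a b)) hp M
    (ENNReal.ofReal_pos.2 hε₂).ne'
  obtain ⟨χ, hχ_smooth, hχ_supp, hχ01, hχ1⟩ := exists_contDiff_cutoff_Ioo hab hη
  refine ⟨χ • g, hχ_smooth.smul hg_smooth, (tsupport_smul_subset_left χ g).trans hχ_supp, ?_⟩
  have hcut : eLpNorm (g - χ • g) p (volume.restrict (Ioo a b)) ≤ ENNReal.ofReal (ε / 2) := by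
    refine (eLpNorm_mono fun x => ?_).trans (hη_ind _ (by simpa using hχ1))
    by_cases hx : χ x = 1
    · simp [hx]
    · rw [indicator_of_mem hx]
      obtain ⟨hχx0, hχx1⟩ := hχ01 x
      calc ‖g x - χ x • g x‖ = ‖(1 - χ x) • g x‖ := by rw [sub_smul, one_smul]
        _ = |1 - χ x| * ‖g x‖ := by rw [norm_smul, Real.norm_eq_abs]
        _ ≤ 1 * M := by gcongr; exacts [abs_le.2 ⟨by linarith, by linarith⟩, hM x]
        _ ≤ ‖M‖ := by simp [le_abs_self]
  calc eLpNorm (f - χ • g) p (volume.restrict (Ioo a b))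
      = eLpNorm ((f - g) + (g - χ • g)) p (volume.restrict (Ioo a b)) := by
        rw [sub_add_sub_cancel]
    _ ≤ eLpNorm (f - g) p (volume.restrict (Ioo a b)) +
          eLpNorm (g - χ • g) p (volume.restrict (Ioo a b)) :=
        eLpNorm_add_le (hf.1.sub hg_smooth.continuous.aestronglyMeasurable)
          (hg_smooth.continuous.aestronglyMeasurable.sub
            (hχ_smooth.smul hg_smooth).continuous.aestronglyMeasurable) hp₁
    _ ≤ ENNReal.ofReal (ε / 2) + ENNReal.ofReal (ε / 2) := add_le_add hfg hcut
    _ = ENNReal.ofReal ε := by rw [← ENNReal.ofReal_add hε₂.le hε₂.le, add_halves]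

theorem Lp.dense_contDiff_tsupport_subset_Ioo {F : Type*} [NormedAddCommGroup F]
    [NormedSpace ℝ F] {p : ℝ≥0∞} (hp : p ≠ ⊤) [hp₁ : Fact (1 ≤ p)] (a b : ℝ) :
    Dense {f : Lp F p (volume.restrict (Ioo a b)) | ∃ g : ℝ → F,
      f =ᵐ[volume.restrict (Ioo a b)] g ∧ ContDiff ℝ ∞ g ∧ tsupport g ⊆ Ioo a b} := by
  intro f
  refine (mem_closure_iff_nhds_basis Metric.nhds_basis_closedBall).2 fun ε hε => ?_
  obtain ⟨g, hg, hg_supp, hfg⟩ :=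
    (Lp.memLp f).exists_contDiff_tsupport_subset_Ioo hp hp₁.out hε
  have hg_mem : MemLp g p (volume.restrict (Ioo a b)) :=
    hg.continuous.memLp_of_hasCompactSupport <| isCompact_Icc.of_isClosed_subset
      (isClosed_tsupport g) (hg_supp.trans Ioo_subset_Icc_self)
  refine ⟨hg_mem.toLp, ⟨g, hg_mem.coeFn_toLp, hg, hg_supp⟩, ?_⟩
  rw [Metric.mem_closedBall, dist_comm, Lp.dist_def,
    ← ENNReal.le_ofReal_iff_toReal_le ((Lp.memLp f).sub (Lp.memLp _)).eLpNorm_ne_top hε.le]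
  refine le_of_eq_of_le (eLpNorm_congr_ae ?_) hfg
  filter_upwards [hg_mem.coeFn_toLp] with x hx
  simp [hx]

theorem Lp.isClosed_setOf_ae_imp_eq_zero {α E : Type*} [MeasurableSpace α] {μ : Measure α}
    [NormedAddCommGroup E] {p : ℝ≥0∞} [Fact (1 ≤ p)] (P : α → Prop) :
    IsClosed {f : Lp E p μ | ∀ᵐ x ∂μ, P x → f x = 0} := by
  refine IsSeqClosed.isClosed fun f g hf hfg => ?_
  obtain ⟨ns, -, hns⟩ := (tendstoInMeasure_of_tendsto_Lp hfg).exists_seq_tendsto_ae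
  filter_upwards [hns, ae_all_iff.2 fun n => hf (ns n)] with x hx hzero hPx
  exact tendsto_nhds_unique hx (tendsto_const_nhds.congr fun n => (hzero n hPx).symm)

end MeasureTheory

/-- The space `L²(𝒲)` of the paper. -/
def L2W (w : ℝ → ℂ) : Set (Lp ℂ 2 m01) := {Z | ∀ᵐ x ∂m01, w x = 0 → Z x = 0}

theorem isClosed_L2W (w : ℝ → ℂ) : IsClosed (L2W w) :=
  Lp.isClosed_setOf_ae_imp_eq_zero _

section HainLust

variable {q u w : ℝ → ℂ} {α β : ℝ} {lam : ℂ} {Y Z F G : Lp ℂ 2 m01}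

theorem HLGraph.snd_ae_eq (h : HLGraph q u w α β Y Z F G) :
    (G : ℝ → ℂ) =ᵐ[m01] fun x => w x * Y x + u x * Z x := by
  obtain ⟨y, -, -, -, -, -, -, -, -, hYy, -, hG⟩ := h
  filter_upwards [hYy, hG] with x hYx hGx
  rw [hGx, hYx]

theorem HLGraph.ae_sub_smul_eq (h : HLGraph q u w α β Y Z F G) (c : ℂ) :
    ∀ᵐ x ∂m01, w x = 0 → (G - c • Z : Lp ℂ 2 m01) x = (u x - c) * Z x := by
  filter_upwards [h.snd_ae_eq, Lp.coeFn_sub G (c • Z), Lp.coeFn_smul c Z]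
    with x hG hsub hsmul hwx
  rw [hsub, Pi.sub_apply, hsmul, hG, hwx, Pi.smul_apply, smul_eq_mul]
  ring

theorem hlGraph_zero_left (hwZ : ∀ᵐ x ∂m01, w x * Z x = 0)
    (hG : (G : ℝ → ℂ) =ᵐ[m01] fun x => u x * Z x) : HLGraph q u w α β 0 Z 0 G := by
  refine ⟨fun _ => 0, fun _ => 0, fun _ => 0, fun t _ => hasDerivWithinAt_const t _ 0,
    continuousOn_const, by simp, MemLp.zero, by simp, by simp, Lp.coeFn_zero _ _ _, ?_, ?_⟩
  · filter_upwards [Lp.coeFn_zero ℂ 2 m01, hwZ] with x h0 hx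
    rw [h0, Pi.zero_apply, hx]
    ring
  · filter_upwards [hG] with x hx
    simp [hx]

theorem hlGraph_of_contDiff (hq : MemLp q ⊤ m01) (hu : MemLp u ⊤ m01) (hw : MemLp w ⊤ m01)
    {g : ℝ → ℂ} (hg : ContDiff ℝ 2 g) (hg_supp : tsupport g ⊆ Ioo 0 1)
    (hYg : (Y : ℝ → ℂ) =ᵐ[m01] g) (Z : Lp ℂ 2 m01) :
    ∃ F G : Lp ℂ 2 m01, HLGraph q u w α β Y Z F G := by
  have hcs : HasCompactSupport g :=
    isCompact_Icc.of_isClosed_subset (isClosed_tsupport g) (hg_supp.trans Ioo_subset_Icc_self)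
  have hg' : ContDiff ℝ 1 (deriv g) := ContDiff.deriv' (n := 1) hg
  have hg''_cont : Continuous (deriv (deriv g)) := hg'.continuous_deriv le_rfl
  have hg_mem : MemLp g 2 m01 := hg.continuous.memLp_of_hasCompactSupport hcs
  have hg''_mem : MemLp (deriv (deriv g)) 2 m01 :=
    hg''_cont.memLp_of_hasCompactSupport hcs.deriv.deriv
  have hF : MemLp (fun x => -deriv (deriv g) x + q x * g x + w x * Z x) 2 m01 :=
    (hg''_mem.neg.add (hg_mem.mul' hq)).add ((Lp.memLp Z).mul' hw)
  have hG : MemLp (fun x => w x * g x + u x * Z x) 2 m01 :=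
    (hg_mem.mul' hw).add ((Lp.memLp Z).mul' hu)
  have h_bdry : ∀ t, t ∉ Ioo (0 : ℝ) 1 → g t = 0 ∧ deriv g t = 0 := fun t ht =>
    ⟨image_eq_zero_of_notMem_tsupport fun h => ht (hg_supp h),
      image_eq_zero_of_notMem_tsupport fun h => ht (hg_supp (tsupport_deriv_subset h))⟩
  obtain ⟨h0, h0'⟩ := h_bdry 0 (by simp)
  obtain ⟨h1, h1'⟩ := h_bdry 1 (by simp)
  refine ⟨hF.toLp _, hG.toLp _, g, deriv g, deriv (deriv g),
    fun t _ => (hg.differentiable (by norm_num) t).hasDerivAt.hasDerivWithinAt,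
    hg'.continuous.continuousOn, fun t _ => ?_, hg''_mem, by simp [h1, h1'], by simp [h0, h0'],
    hYg, hF.coeFn_toLp, hG.coeFn_toLp⟩
  rw [intervalIntegral.integral_deriv_eq_sub (fun x _ => hg'.differentiable one_ne_zero x)
    (hg''_cont.intervalIntegrable 0 t)]
  ring

variable {R : (Lp ℂ 2 m01 × Lp ℂ 2 m01) →L[ℂ] (Lp ℂ 2 m01 × Lp ℂ 2 m01)}

theorem eq_zero_of_hlGraph_smul
    (hR : ∀ Y Z F G : Lp ℂ 2 m01,
      HLGraph q u w α β Y Z F G → R (F - lam • Y, G - lam • Z) = (Y, Z))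
    (h : HLGraph q u w α β Y Z (lam • Y) (lam • Z)) : (Y, Z) = 0 := by
  have h0 := hR _ _ _ _ h
  rw [sub_self, sub_self, Prod.mk_zero_zero, map_zero] at h0
  exact h0.symm

theorem image_subset_L2W (hw : AEStronglyMeasurable w m01)
    (hR₁ : ∀ FG : Lp ℂ 2 m01 × Lp ℂ 2 m01,
      HLGraph q u w α β (R FG).1 (R FG).2 (FG.1 + lam • (R FG).1) (FG.2 + lam • (R FG).2))
    (hR₂ : ∀ Y Z F G : Lp ℂ 2 m01,
      HLGraph q u w α β Y Z F G → R (F - lam • Y, G - lam • Z) = (Y, Z)) :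
    R '' (Prod.snd ⁻¹' L2W w) ⊆ Prod.snd ⁻¹' L2W w := by
  rintro _ ⟨FG, hFG, rfl⟩
  set Z := (R FG).2
  have huZ : ∀ᵐ x ∂m01, w x = 0 → (u x - lam) * Z x = 0 := by
    filter_upwards [(hR₁ FG).ae_sub_smul_eq lam, hFG] with x hx hFGx hwx
    rw [← hx hwx, add_sub_cancel_right]
    exact hFGx hwx
  have hE : NullMeasurableSet {x | w x = 0} m01 :=
    hw.nullMeasurableSet_eq_fun aestronglyMeasurable_const
  have hζ : MemLp ({x | w x = 0}.indicator Z) 2 m01 :=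
    (Lp.memLp Z).of_le ((Lp.aestronglyMeasurable Z).indicator₀ hE)
      (Eventually.of_forall fun x => norm_indicator_le_norm_self _ _)
  have hζ_graph : HLGraph q u w α β 0 (hζ.toLp _) (lam • 0) (lam • hζ.toLp _) := by
    rw [smul_zero]
    refine hlGraph_zero_left ?_ ?_
    · filter_upwards [hζ.coeFn_toLp] with x hx
      by_cases hwx : w x = 0 <;> simp [hx, hwx]
    · filter_upwards [hζ.coeFn_toLp, Lp.coeFn_smul lam (hζ.toLp _), huZ] with x hx hsmul huZx
      rw [hsmul, Pi.smul_apply, hx]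
      by_cases hwx : w x = 0
      · simp only [indicator_of_mem (show x ∈ {x | w x = 0} from hwx), smul_eq_mul]
        linear_combination -huZx hwx
      · simp [hwx]
  have hζ0 : hζ.toLp _ = 0 := (Prod.ext_iff.1 (eq_zero_of_hlGraph_smul hR₂ hζ_graph)).2
  show ∀ᵐ x ∂m01, w x = 0 → Z x = 0
  filter_upwards [hζ.coeFn_toLp, Lp.eq_zero_iff_ae_eq_zero.1 hζ0] with x hx hx0 hwx
  rw [← indicator_of_mem (show x ∈ {x | w x = 0} from hwx) Z, ← hx, hx0, Pi.zero_apply]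

theorem mem_image_of_contDiff (hq : MemLp q ⊤ m01) (hu : MemLp u ⊤ m01) (hw : MemLp w ⊤ m01)
    (hR₂ : ∀ Y Z F G : Lp ℂ 2 m01,
      HLGraph q u w α β Y Z F G → R (F - lam • Y, G - lam • Z) = (Y, Z))
    {g : ℝ → ℂ} (hg : ContDiff ℝ 2 g) (hg_supp : tsupport g ⊆ Ioo 0 1)
    (hYg : (Y : ℝ → ℂ) =ᵐ[m01] g) (hZ : Z ∈ L2W w) :
    (Y, Z) ∈ R '' (Prod.snd ⁻¹' L2W w) := by
  obtain ⟨F, G, h⟩ := hlGraph_of_contDiff (α := α) (β := β) hq hu hw hg hg_supp hYg Z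
  refine ⟨(F - lam • Y, G - lam • Z), ?_, hR₂ _ _ _ _ h⟩
  show ∀ᵐ x ∂m01, w x = 0 → (G - lam • Z : Lp ℂ 2 m01) x = 0
  filter_upwards [h.ae_sub_smul_eq lam, hZ] with x hx hZx hwx
  rw [hx hwx, hZx hwx, mul_zero]

end HainLust

theorem stmt9 (q u w : ℝ → ℂ)
    (hq : MemLp q ⊤ m01) (hu : MemLp u ⊤ m01) (hw : MemLp w ⊤ m01)
    (α β : ℝ)
    (lam : ℂ)
    -- `λ ∈ ρ(A_{αβ})`, with resolvent `R = (A_{αβ} − λ)⁻¹`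
    (R : (Lp ℂ 2 m01 × Lp ℂ 2 m01) →L[ℂ] (Lp ℂ 2 m01 × Lp ℂ 2 m01))
    (hR₁ : ∀ FG : Lp ℂ 2 m01 × Lp ℂ 2 m01,
      HLGraph q u w α β (R FG).1 (R FG).2
        (FG.1 + lam • (R FG).1) (FG.2 + lam • (R FG).2))
    (hR₂ : ∀ Y Z F G : Lp ℂ 2 m01,
      HLGraph q u w α β Y Z F G → R (F - lam • Y, G - lam • Z) = (Y, Z)) :
    -- the closure of the image under `(A_{αβ} − λ)⁻¹` of `L²(0,1) ⊕ L²(𝒲)`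
    -- equals `L²(0,1) ⊕ L²(𝒲)`
    closure (R '' {FG : Lp ℂ 2 m01 × Lp ℂ 2 m01 |
        ∀ᵐ x ∂m01, w x = 0 → (FG.2 : ℝ → ℂ) x = 0}) =
      {FG : Lp ℂ 2 m01 × Lp ℂ 2 m01 |
        ∀ᵐ x ∂m01, w x = 0 → (FG.2 : ℝ → ℂ) x = 0} := by
  change closure (R '' (Prod.snd ⁻¹' L2W w)) = Prod.snd ⁻¹' L2W w
  refine (closure_minimal (image_subset_L2W hw.1 hR₁ hR₂)
    ((isClosed_L2W w).preimage continuous_snd)).antisymm ?_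
  rintro ⟨Y, Z⟩ (hZ : Z ∈ L2W w)
  have hYZ := mk_mem_prod (Lp.dense_contDiff_tsupport_subset_Ioo ENNReal.ofNat_ne_top 0 1 Y)
    (subset_closure (mem_singleton Z))
  rw [← closure_prod_eq] at hYZ
  refine closure_mono ?_ hYZ
  rintro ⟨Y', Z'⟩ ⟨⟨g, hYg, hg, hg_supp⟩, rfl⟩
  exact mem_image_of_contDiff hq hu hw hR₂ (hg.of_le (WithTop.coe_le_coe.2 le_top)) hg_supp hYg hZ
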